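/- Let ℓ > 0 and let c, c' ∈ L_ℓ with c ≠ c'. Then the open truncated-octahedron cells T(c) and T(c') are disjoint: T(c) ∩ T(c') = ∅. -/

import Mathlib

noncomputable section

abbrev V3 := EuclideanSpace ℝ (Fin 3)

/-- The body-centered cubic lattice L_ℓ = {ℓn : n ∈ ℤ³} ∪ {ℓn + (ℓ/2,ℓ/2,ℓ/2) : n ∈ ℤ³}. -/
def latt (ℓ : ℝ) : Set V3 :=
  {c | ∃ n : Fin 3 → ℤ, (∀ i, c i = ℓ * n i) ∨ (∀ i, c i = ℓ * n i + ℓ / 2)}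

/-- The open truncated-octahedron cell with center c and parameter ℓ. -/
def Tcell (ℓ : ℝ) (c : V3) : Set V3 :=
  {ξ | (∀ i, |ξ i - c i| < ℓ / 2) ∧
    |ξ 0 - c 0| + |ξ 1 - c 1| + |ξ 2 - c 2| < (3 / 4) * ℓ}

/-!
If `ξ` lies in both cells, the triangle inequality gives `|cᵢ - c'ᵢ| < ℓ` for every `i` and
`∑ᵢ |cᵢ - c'ᵢ| < 3ℓ/2`. But `c - c'` is a nonzero point of the lattice: either it lies in `ℓℤ³`,
so one coordinate has absolute value at least `ℓ`, or all its coordinates lie in `ℓℤ + ℓ/2`,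
so each has absolute value at least `ℓ/2`.
-/

lemma abs_sub_le_abs_sub_add_abs_sub (a b x : ℝ) : |a - b| ≤ |x - a| + |x - b| := by
  simpa only [abs_sub_comm x a] using abs_sub_le a x b

lemma le_abs_mul_intCast {ℓ : ℝ} (hℓ : 0 ≤ ℓ) {k : ℤ} (hk : k ≠ 0) : ℓ ≤ |ℓ * k| := by
  have hk' : (1 : ℝ) ≤ |(k : ℝ)| := by exact_mod_cast Int.one_le_abs hk
  rw [abs_mul, abs_of_nonneg hℓ]
  nlinarith

lemma half_le_abs_mul_intCast_add_half {ℓ : ℝ} (hℓ : 0 ≤ ℓ) (k : ℤ) :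
    ℓ / 2 ≤ |ℓ * k + ℓ / 2| := by
  have hodd : (1 : ℝ) ≤ |((2 * k + 1 : ℤ) : ℝ)| := by
    exact_mod_cast Int.one_le_abs (by omega : 2 * k + 1 ≠ 0)
  have : ℓ * k + ℓ / 2 = ℓ / 2 * ((2 * k + 1 : ℤ) : ℝ) := by push_cast; ring
  rw [this, abs_mul, abs_of_nonneg (by linarith)]
  nlinarith

lemma sub_mem_latt {ℓ : ℝ} {c c' : V3} (hc : c ∈ latt ℓ) (hc' : c' ∈ latt ℓ) :
    c - c' ∈ latt ℓ := by
  obtain ⟨n, hn | hn⟩ := hc <;> obtain ⟨m, hm | hm⟩ := hc'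
  · refine ⟨n - m, .inl fun i => ?_⟩
    simp only [PiLp.sub_apply, Pi.sub_apply, hn i, hm i]
    push_cast; ring
  · refine ⟨n - m - 1, .inr fun i => ?_⟩
    simp only [PiLp.sub_apply, Pi.sub_apply, Pi.one_apply, hn i, hm i]
    push_cast; ring
  · refine ⟨n - m, .inr fun i => ?_⟩
    simp only [PiLp.sub_apply, Pi.sub_apply, hn i, hm i]
    push_cast; ring
  · refine ⟨n - m, .inl fun i => ?_⟩
    simp only [PiLp.sub_apply, Pi.sub_apply, hn i, hm i]
    push_cast; ring

lemma exists_le_abs_or_le_abs_add_of_mem_latt {ℓ : ℝ} (hℓ : 0 ≤ ℓ) {d : V3} (hd : d ∈ latt ℓ)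
    (hd0 : d ≠ 0) :
    (∃ i, ℓ ≤ |d i|) ∨ 3 / 2 * ℓ ≤ |d 0| + |d 1| + |d 2| := by
  obtain ⟨n, hn | hn⟩ := hd
  · obtain ⟨i, hi⟩ : ∃ i, n i ≠ 0 := by
      by_contra! h
      exact hd0 (by ext i; simp [hn i, h i])
    exact .inl ⟨i, hn i ▸ le_abs_mul_intCast hℓ hi⟩
  · have h := fun i => hn i ▸ half_le_abs_mul_intCast_add_half hℓ (n i)
    exact .inr (by linarith [h 0, h 1, h 2])

section Tcell

variable {ℓ : ℝ} {c c' ξ : V3}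

lemma pos_of_mem_Tcell (hξ : ξ ∈ Tcell ℓ c) : 0 < ℓ := by
  linarith [hξ.1 0, abs_nonneg (ξ 0 - c 0)]

lemma abs_sub_lt_of_mem_Tcell (hξ : ξ ∈ Tcell ℓ c) (hξ' : ξ ∈ Tcell ℓ c') (i : Fin 3) :
    |c i - c' i| < ℓ := by
  linarith [abs_sub_le_abs_sub_add_abs_sub (c i) (c' i) (ξ i), hξ.1 i, hξ'.1 i]

lemma abs_sub_add_lt_of_mem_Tcell (hξ : ξ ∈ Tcell ℓ c) (hξ' : ξ ∈ Tcell ℓ c') :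
    |c 0 - c' 0| + |c 1 - c' 1| + |c 2 - c' 2| < 3 / 2 * ℓ := by
  have h := fun i => abs_sub_le_abs_sub_add_abs_sub (c i) (c' i) (ξ i)
  linarith [h 0, h 1, h 2, hξ.2, hξ'.2]

end Tcell

theorem truncated_octahedron_cells_disjoint_general
    (ℓ : ℝ) (c c' : V3) (hc : c ∈ latt ℓ) (hc' : c' ∈ latt ℓ)
    (hne : c ≠ c') :
    Tcell ℓ c ∩ Tcell ℓ c' = ∅ := by
  refine Set.eq_empty_of_forall_notMem fun ξ ⟨hξ, hξ'⟩ => ?_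
  have hℓ := pos_of_mem_Tcell hξ
  rcases exists_le_abs_or_le_abs_add_of_mem_latt hℓ.le (sub_mem_latt hc hc')
      (sub_ne_zero.mpr hne) with ⟨i, hi⟩ | hsum
  · exact (abs_sub_lt_of_mem_Tcell hξ hξ' i).not_ge (by simpa using hi)
  · exact (abs_sub_add_lt_of_mem_Tcell hξ hξ').not_ge (by simpa using hsum)

/-- Distinct truncated-octahedron cells centered at lattice points are disjoint. -/
theorem truncated_octahedron_cells_disjoint
    (ℓ : ℝ) (hℓ : 0 < ℓ) (c c' : V3) (hc : c ∈ latt ℓ) (hc' : c' ∈ latt ℓ)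
    (hne : c ≠ c') :
    Tcell ℓ c ∩ Tcell ℓ c' = ∅ :=
  truncated_octahedron_cells_disjoint_general ℓ c c' hc hc' hne
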